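/- arXiv:2302.11388 — 4 statements merged into one kernel-verified Lean document; each statement's English description precedes it below -/
import Mathlib

section
/- Let L be a G-graded Lie algebra and P a graded ideal of L. Then P is graded prime if and only if for all homogeneous elements x, y of L with [x, ⟨y⟩] ⊆ P, either x ∈ P or y ∈ P, where ⟨y⟩ denotes the Lie ideal of L generated by y. -/
theorem stmt2 {F : Type*} [Field F] {G : Type*} [AddCommGroup G] [DecidableEq G]
    {L : Type*} [LieRing L] [LieAlgebra F L]
    (ℒ : G → Submodule F L)
    (hdecomp : DirectSum.IsInternal ℒ)
    (hgrade : ∀ g h : G, ∀ x ∈ ℒ g, ∀ y ∈ ℒ h, ⁅x, y⁆ ∈ ℒ (g + h))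
    (P : LieIdeal F L)
    (hPgr : ((P : Submodule F L) = ⨆ g, (P : Submodule F L) ⊓ ℒ g)) :
    (∀ I J : LieIdeal F L,
      ((I : Submodule F L) = ⨆ g, (I : Submodule F L) ⊓ ℒ g) →
      ((J : Submodule F L) = ⨆ g, (J : Submodule F L) ⊓ ℒ g) →
      ⁅I, J⁆ ≤ P → I ≤ P ∨ J ≤ P) ↔
      (∀ x y : L, (∃ g, x ∈ ℒ g) → (∃ g, y ∈ ℒ g) →
        (∀ j ∈ LieSubmodule.lieSpan F L {y}, ⁅x, j⁆ ∈ P) →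
        x ∈ P ∨ y ∈ P) := by
  have htop : (⨆ g, ℒ g) = ⊤ := hdecomp.submodule_iSup_eq_top
  -- key: lieSpan of a homogeneous element is graded
  have hspan : ∀ (x : L) (g : G), x ∈ ℒ g →
      ((LieSubmodule.lieSpan F L {x} : Submodule F L) =
        ⨆ h, (LieSubmodule.lieSpan F L {x} : Submodule F L) ⊓ ℒ h) := by
    intro x g hx
    set I := LieSubmodule.lieSpan F L {x}
    set S : Submodule F L := ⨆ h, (I : Submodule F L) ⊓ ℒ h with hS
    refine le_antisymm ?_ (iSup_le fun h => inf_le_left)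
    have hlie : ∀ m ∈ S, ∀ z : L, ⁅z, m⁆ ∈ S := by
      intro m hm
      refine Submodule.iSup_induction (motive := fun m => ∀ z : L, ⁅z, m⁆ ∈ S) _ hm ?_
        (by intro z; simp) ?_
      · intro h m hm z
        have hz : z ∈ ⨆ g, ℒ g := by rw [htop]; trivial
        refine Submodule.iSup_induction (motive := fun z => ⁅z, m⁆ ∈ S) _ hz ?_ (by simp) ?_
        · intro h' z hz
          refine le_iSup (fun h => (I : Submodule F L) ⊓ ℒ h) (h' + h) ?_
          exact ⟨I.lie_mem hm.1, hgrade _ _ _ hz _ hm.2⟩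
        · intro a b ha hb; rw [add_lie]; exact S.add_mem ha hb
      · intro a b ha hb z; rw [lie_add]; exact S.add_mem (ha z) (hb z)
    have : I ≤ ({ S with lie_mem := fun {z m} hm => hlie m hm z } : LieSubmodule F L L) := by
      rw [LieSubmodule.lieSpan_le]
      refine Set.singleton_subset_iff.mpr ?_
      exact le_iSup (fun h => (I : Submodule F L) ⊓ ℒ h) g ⟨LieSubmodule.subset_lieSpan rfl, hx⟩
    exact this
  constructor
  · rintro hP x y ⟨g, hx⟩ ⟨h, hy⟩ hxy
    set J := LieSubmodule.lieSpan F L {y}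
    -- N = {a | ∀ j ∈ J, ⁅a,j⁆ ∈ P} is a Lie ideal
    set Nsub : Submodule F L :=
      { carrier := {a | ∀ j ∈ J, ⁅a, j⁆ ∈ P}
        add_mem' := fun ha hb j hj => by rw [add_lie]; exact P.add_mem (ha j hj) (hb j hj)
        zero_mem' := fun j hj => by simp
        smul_mem' := fun c a ha j hj => by rw [smul_lie]; exact P.smul_mem c (ha j hj) }
    have hNlie : ∀ {z a : L}, a ∈ Nsub → ⁅z, a⁆ ∈ Nsub := by
      intro z a ha j hj
      rw [lie_lie z a j]
      exact P.sub_mem (P.lie_mem (ha j hj)) (ha _ (J.lie_mem hj))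
    set N : LieIdeal F L := { Nsub with lie_mem := hNlie }
    have hxN : LieSubmodule.lieSpan F L {x} ≤ N :=
      LieSubmodule.lieSpan_le.mpr (Set.singleton_subset_iff.mpr hxy)
    have hIJ : ⁅LieSubmodule.lieSpan F L {x}, J⁆ ≤ P := by
      rw [LieSubmodule.lie_le_iff]
      intro a ha j hj
      exact hxN ha j hj
    rcases hP _ _ (hspan x g hx) (hspan y h hy) hIJ with hI | hJ
    · exact Or.inl (hI (LieSubmodule.subset_lieSpan rfl))
    · exact Or.inr (hJ (LieSubmodule.subset_lieSpan rfl))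
  · intro hP I J hIgr hJgr hIJ
    by_cases hI : I ≤ P
    · exact Or.inl hI
    right
    -- find homogeneous x ∈ I \ P
    obtain ⟨x, g, hxg, hxI, hxP⟩ : ∃ x g, x ∈ ℒ g ∧ x ∈ I ∧ x ∉ P := by
      by_contra hcon
      push_neg at hcon
      apply hI
      intro a ha
      have : a ∈ (I : Submodule F L) := ha
      rw [hIgr] at this
      refine Submodule.iSup_induction (motive := fun a => a ∈ P) _ this ?_ P.zero_mem
        (fun a b => P.add_mem)
      intro g a ha
      exact hcon a g ha.2 ha.1
    intro b hb
    have : b ∈ (J : Submodule F L) := hb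
    rw [hJgr] at this
    refine Submodule.iSup_induction (motive := fun b => b ∈ P) _ this ?_ P.zero_mem
      (fun a b => P.add_mem)
    intro h y hy
    have key : ∀ j ∈ LieSubmodule.lieSpan F L {y}, ⁅x, j⁆ ∈ P := by
      intro j hj
      have hjJ : j ∈ J := LieSubmodule.lieSpan_le.mpr (Set.singleton_subset_iff.mpr hy.1) hj
      exact hIJ (LieSubmodule.lie_mem_lie hxI hjJ)
    rcases hP x y ⟨g, hxg⟩ ⟨h, hy.2⟩ key with h1 | h2
    · exact absurd h1 hxP
    · exact h2
end

section
/- Let L be a graded Lie algebra. A graded ideal P of L is graded prime if and only if P is both graded irreducible and graded semiprime. -/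
section aux

variable {F : Type*} [Field F] {G : Type*} [AddCommGroup G] [DecidableEq G]
    {L : Type*} [LieRing L] [LieAlgebra F L]
    (ℒ : G → Submodule F L) [DirectSum.Decomposition ℒ]

theorem component_mem_of_graded (K : Submodule F L)
    (hK : K = ⨆ g, K ⊓ ℒ g) {x : L} (hx : x ∈ K) (g : G) :
    (DirectSum.decompose ℒ x g : L) ∈ K := by
  rw [hK] at hx
  refine Submodule.iSup_induction (motive := fun x => ∀ g : G, (DirectSum.decompose ℒ x g : L) ∈ K)
    _ hx ?_ ?_ ?_ g
  · rintro h y ⟨hyK, hyh⟩ g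
    by_cases hgh : g = h
    · subst hgh
      rw [DirectSum.decompose_of_mem_same ℒ hyh]
      exact hyK
    · rw [DirectSum.decompose_of_mem_ne ℒ hyh (Ne.symm hgh)]
      exact K.zero_mem
  · intro g
    simp only [DirectSum.decompose_zero, DirectSum.zero_apply, ZeroMemClass.coe_zero]
    exact K.zero_mem
  · intro a b ha hb g
    simp only [DirectSum.decompose_add, DirectSum.add_apply, AddSubmonoid.coe_add,
      Submodule.coe_toAddSubmonoid]
    exact K.add_mem (ha g) (hb g)

theorem inf_graded (K₁ K₂ : Submodule F L)
    (h₁ : K₁ = ⨆ g, K₁ ⊓ ℒ g) (h₂ : K₂ = ⨆ g, K₂ ⊓ ℒ g) :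
    K₁ ⊓ K₂ = ⨆ g, (K₁ ⊓ K₂) ⊓ ℒ g := by
  classical
  refine le_antisymm ?_ (iSup_le fun g => inf_le_left)
  rintro x ⟨hx₁, hx₂⟩
  rw [← DirectSum.sum_support_decompose ℒ x]
  refine Submodule.sum_mem _ fun g _ => ?_
  refine Submodule.mem_iSup_of_mem g ⟨⟨?_, ?_⟩, (DirectSum.decompose ℒ x g).2⟩
  · exact component_mem_of_graded ℒ K₁ h₁ hx₁ g
  · exact component_mem_of_graded ℒ K₂ h₂ hx₂ g

theorem sup_graded (K₁ K₂ : Submodule F L)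
    (h₁ : K₁ = ⨆ g, K₁ ⊓ ℒ g) (h₂ : K₂ = ⨆ g, K₂ ⊓ ℒ g) :
    K₁ ⊔ K₂ = ⨆ g, (K₁ ⊔ K₂) ⊓ ℒ g := by
  refine le_antisymm ?_ (iSup_le fun g => inf_le_left)
  refine sup_le ?_ ?_
  · calc K₁ = ⨆ g, K₁ ⊓ ℒ g := h₁
      _ ≤ ⨆ g, (K₁ ⊔ K₂) ⊓ ℒ g :=
        iSup_le fun g => le_iSup_of_le g (inf_le_inf_right _ le_sup_left)
  · calc K₂ = ⨆ g, K₂ ⊓ ℒ g := h₂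
      _ ≤ ⨆ g, (K₁ ⊔ K₂) ⊓ ℒ g :=
        iSup_le fun g => le_iSup_of_le g (inf_le_inf_right _ le_sup_right)

end aux

theorem stmt12 {F : Type*} [Field F] {G : Type*} [AddCommGroup G] [DecidableEq G]
    {L : Type*} [LieRing L] [LieAlgebra F L]
    (ℒ : G → Submodule F L)
    (hdecomp : DirectSum.IsInternal ℒ)
    (hgrade : ∀ g h : G, ∀ x ∈ ℒ g, ∀ y ∈ ℒ h, ⁅x, y⁆ ∈ ℒ (g + h))
    (P : LieIdeal F L)
    (hPgr : ((P : Submodule F L) = ⨆ g, (P : Submodule F L) ⊓ ℒ g)) :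
    (∀ I J : LieIdeal F L,
      ((I : Submodule F L) = ⨆ g, (I : Submodule F L) ⊓ ℒ g) →
      ((J : Submodule F L) = ⨆ g, (J : Submodule F L) ⊓ ℒ g) →
      ⁅I, J⁆ ≤ P → I ≤ P ∨ J ≤ P) ↔
      ((∀ I J : LieIdeal F L,
          ((I : Submodule F L) = ⨆ g, (I : Submodule F L) ⊓ ℒ g) →
          ((J : Submodule F L) = ⨆ g, (J : Submodule F L) ⊓ ℒ g) →
          P = I ⊓ J → P = I ∨ P = J) ∧
        (∀ Hi : LieIdeal F L,
          ((Hi : Submodule F L) = ⨆ g, (Hi : Submodule F L) ⊓ ℒ g) →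
          ⁅Hi, Hi⁆ ≤ P → Hi ≤ P)) := by
  haveI : DirectSum.Decomposition ℒ := hdecomp.chooseDecomposition
  constructor
  · intro hprime
    constructor
    · intro I J hI hJ hPIJ
      have hbr : ⁅I, J⁆ ≤ P := hPIJ ▸ LieSubmodule.lie_le_inf I J
      rcases hprime I J hI hJ hbr with h | h
      · exact Or.inl (le_antisymm (hPIJ ▸ inf_le_left) h)
      · exact Or.inr (le_antisymm (hPIJ ▸ inf_le_right) h)
    · intro Hi hHi hbr
      rcases hprime Hi Hi hHi hHi hbr with h | h <;> exact h
  · rintro ⟨hirr, hsemi⟩ I J hI hJ hbr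
    set I' : LieIdeal F L := P ⊔ I with hI'def
    set J' : LieIdeal F L := P ⊔ J with hJ'def
    have hI'gr : ((I' : Submodule F L) = ⨆ g, (I' : Submodule F L) ⊓ ℒ g) := by
      simp only [hI'def, LieIdeal.toLieSubalgebra_toSubmodule] at *
      rw [LieSubmodule.sup_toSubmodule]
      exact sup_graded ℒ _ _ hPgr hI
    have hJ'gr : ((J' : Submodule F L) = ⨆ g, (J' : Submodule F L) ⊓ ℒ g) := by
      simp only [hJ'def, LieIdeal.toLieSubalgebra_toSubmodule] at *
      rw [LieSubmodule.sup_toSubmodule]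
      exact sup_graded ℒ _ _ hPgr hJ
    have hHgr : (((I' ⊓ J' : LieIdeal F L) : Submodule F L)
        = ⨆ g, ((I' ⊓ J' : LieIdeal F L) : Submodule F L) ⊓ ℒ g) := by
      simp only [LieIdeal.toLieSubalgebra_toSubmodule] at *
      rw [LieSubmodule.inf_toSubmodule]
      exact inf_graded ℒ _ _ hI'gr hJ'gr
    have hbr' : ⁅I' ⊓ J', I' ⊓ J'⁆ ≤ P := by
      calc ⁅I' ⊓ J', I' ⊓ J'⁆ ≤ ⁅I', J'⁆ :=
            LieSubmodule.mono_lie inf_le_left inf_le_right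
        _ ≤ P := by
            rw [hI'def, hJ'def, LieSubmodule.sup_lie, LieSubmodule.lie_sup,
              LieSubmodule.lie_sup]
            refine sup_le (sup_le ?_ ?_) (sup_le ?_ ?_)
            · exact LieSubmodule.lie_le_left P P
            · exact LieSubmodule.lie_le_left P J
            · exact LieSubmodule.lie_le_right P I
            · exact hbr
    have hle : I' ⊓ J' ≤ P := hsemi _ hHgr hbr'
    have heq : P = I' ⊓ J' := le_antisymm (le_inf le_sup_left le_sup_left) hle
    rcases hirr I' J' hI'gr hJ'gr heq with h | h
    · exact Or.inl (le_sup_right.trans h.ge)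
    · exact Or.inr (le_sup_right.trans h.ge)
end

section
/- Let L be a graded Lie algebra and P a graded total prime ideal of L. Then for every homogeneous element x ∉ P, the ideal (P : x) = {y ∈ L : [y,x] ∈ P} equals (P : L) = {y ∈ L : [y,L] ⊆ P}. -/
set_option maxHeartbeats 1000000 in
set_option synthInstance.maxHeartbeats 200000 in
theorem stmt15 {F : Type*} [Field F] {G : Type*} [AddCommGroup G] [DecidableEq G]
    {L : Type*} [LieRing L] [LieAlgebra F L]
    (ℒ : G → Submodule F L)
    (hdecomp : DirectSum.IsInternal ℒ)
    (hgrade : ∀ g h : G, ∀ x ∈ ℒ g, ∀ y ∈ ℒ h, ⁅x, y⁆ ∈ ℒ (g + h))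
    (P : LieIdeal F L)
    (hPgr : ((P : Submodule F L) = ⨆ g, (P : Submodule F L) ⊓ ℒ g))
    (htp : ∀ x y : L, (∃ g, x ∈ ℒ g) → (∃ g, y ∈ ℒ g) → ⁅x, y⁆ ∈ P → x ∈ P ∨ y ∈ P)
    (x : L) (hx : ∃ g, x ∈ ℒ g) (hxP : x ∉ P) :
    {y : L | ⁅y, x⁆ ∈ P} = {y : L | ∀ z : L, ⁅y, z⁆ ∈ P} := by
  classical
  obtain ⟨g₀, hxg₀⟩ := hx
  let e : (DirectSum G fun g => ℒ g) ≃ₗ[F] L :=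
    LinearEquiv.ofBijective (DirectSum.coeLinearMap ℒ) hdecomp
  have hee : ∀ (g : G) (m : ℒ g), e (DirectSum.of _ g m) = m := fun g m =>
    DirectSum.coeLinearMap_of ℒ g m
  have hsymm : ∀ (g : G) (m : ℒ g), e.symm (m : L) = DirectSum.of _ g m := by
    intro g m
    apply e.injective
    simp [hee]
  have hsum : ∀ w : L, w = ∑ g ∈ (e.symm w).support, ((e.symm w) g : L) := by
    intro w
    conv_lhs => rw [← e.apply_symm_apply w,
      ← DirectSum.sum_support_of (e.symm w)]
    rw [map_sum]
    exact Finset.sum_congr rfl fun g _ => hee g _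
  have hA : ∀ w ∈ P, ∀ g, ((e.symm w) g : L) ∈ P := by
    intro w hw
    have hw' : w ∈ (⨆ g, (P : Submodule F L) ⊓ ℒ g) := hPgr ▸ hw
    refine Submodule.iSup_induction (motive := fun w => ∀ g, ((e.symm w) g : L) ∈ P) _ hw' ?_ ?_ ?_
    · rintro g w ⟨hwP, hwg⟩ g'
      rw [hsymm g ⟨w, hwg⟩, DirectSum.of_apply]
      by_cases h : g = g'
      · subst h; simpa using hwP
      · simp [h]
    · simp
    · intro a b ha hb g
      have := P.add_mem' (ha g) (hb g)
      simpa using this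
  have hB : ∀ (y : L) (h : G),
      ((e.symm ⁅y, x⁆) (h + g₀) : L) = ⁅((e.symm y) h : L), x⁆ := by
    intro y h
    obtain ⟨d, rfl⟩ := e.surjective y
    induction d using DirectSum.induction_on with
    | zero => simp
    | of g m =>
        rw [hee]
        have hx' : ⁅(m : L), x⁆ ∈ ℒ (g + g₀) := hgrade g g₀ m m.2 x hxg₀
        rw [hsymm (g + g₀) ⟨⁅(m : L), x⁆, hx'⟩, hsymm g m,
          DirectSum.of_apply, DirectSum.of_apply]
        by_cases hgh : g = h
        · subst hgh; simp
        · have h2 : ¬(g + g₀ = h + g₀) := by simpa using hgh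
          simp [hgh, h2]
    | add a b ha hb =>
        rw [map_add, add_lie, map_add, DirectSum.add_apply, map_add, DirectSum.add_apply]
        push_cast
        rw [ha, hb, add_lie]
  ext y
  simp only [Set.mem_setOf_eq]
  constructor
  · intro hy
    have hyP : y ∈ P := by
      have hcomp : ∀ h, ((e.symm y) h : L) ∈ P := by
        intro h
        have h1 : ((e.symm ⁅y, x⁆) (h + g₀) : L) ∈ P := hA _ hy (h + g₀)
        rw [hB y h] at h1
        rcases htp _ x ⟨h, ((e.symm y) h).2⟩ ⟨g₀, hxg₀⟩ h1 with h2 | h2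
        · exact h2
        · exact absurd h2 hxP
      rw [hsum y]
      exact sum_mem fun g _ => hcomp g
    intro z
    have hzy : ⁅z, y⁆ ∈ P := P.lie_mem hyP
    have : ⁅y, z⁆ = -⁅z, y⁆ := by rw [← lie_skew]
    rw [this]
    exact neg_mem hzy
  · intro hy
    exact hy x
end

section
/- Let L be a graded Lie algebra and P a graded total prime ideal of L with P ≠ L. Then (P : L) = {y ∈ L : [y,L] ⊆ P} is also a graded total prime ideal of L. -/
private lemma sum_lie' {F : Type*} [Field F] {L : Type*} [LieRing L] [LieAlgebra F L]
    {ι : Type*} (s : Finset ι) (f : ι → L) (z : L) :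
    ⁅∑ i ∈ s, f i, z⁆ = ∑ i ∈ s, ⁅f i, z⁆ := by
  induction s using Finset.cons_induction with
  | empty => simp
  | cons a s ha ih => simp [Finset.sum_cons, add_lie, ih]

private lemma lie_sum' {F : Type*} [Field F] {L : Type*} [LieRing L] [LieAlgebra F L]
    {ι : Type*} (s : Finset ι) (f : ι → L) (z : L) :
    ⁅z, ∑ i ∈ s, f i⁆ = ∑ i ∈ s, ⁅z, f i⁆ := by
  induction s using Finset.cons_induction with
  | empty => simp
  | cons a s ha ih => simp [Finset.sum_cons, lie_add, ih]

theorem stmt16 {F : Type*} [Field F] {G : Type*} [AddCommGroup G] [DecidableEq G]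
    {L : Type*} [LieRing L] [LieAlgebra F L]
    (ℒ : G → Submodule F L)
    (hdecomp : DirectSum.IsInternal ℒ)
    (hgrade : ∀ g h : G, ∀ x ∈ ℒ g, ∀ y ∈ ℒ h, ⁅x, y⁆ ∈ ℒ (g + h))
    (P : LieIdeal F L)
    (hPgr : ((P : Submodule F L) = ⨆ g, (P : Submodule F L) ⊓ ℒ g))
    (htp : ∀ x y : L, (∃ g, x ∈ ℒ g) → (∃ g, y ∈ ℒ g) → ⁅x, y⁆ ∈ P → x ∈ P ∨ y ∈ P)
    (hPne : P ≠ ⊤)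
    (Q : LieIdeal F L) (hQ : ∀ y : L, y ∈ Q ↔ ∀ z : L, ⁅y, z⁆ ∈ P) :
    ((Q : Submodule F L) = ⨆ g, (Q : Submodule F L) ⊓ ℒ g) ∧
      (∀ x y : L, (∃ g, x ∈ ℒ g) → (∃ g, y ∈ ℒ g) → ⁅x, y⁆ ∈ Q → x ∈ Q ∨ y ∈ Q) := by
  classical
  letI : DirectSum.Decomposition ℒ := hdecomp.chooseDecomposition
  -- components of elements of a graded submodule stay in the submodule
  have key : ∀ (S : Submodule F L), S = (⨆ g, S ⊓ ℒ g) →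
      ∀ x ∈ S, ∀ g, (DirectSum.decompose ℒ x g : L) ∈ S := by
    intro S hS x hx g
    have hx' : x ∈ ⨆ g, S ⊓ ℒ g := hS ▸ hx
    refine Submodule.iSup_induction (motive := fun w => (DirectSum.decompose ℒ w g : L) ∈ S)
      _ hx' ?_ ?_ ?_
    · intro h y hy
      obtain ⟨hyS, hyh⟩ := hy
      by_cases hgh : h = g
      · subst hgh; rw [DirectSum.decompose_of_mem_same ℒ hyh]; exact hyS
      · rw [DirectSum.decompose_of_mem_ne ℒ hyh hgh]; exact S.zero_mem
    · simp
    · intro a b ha hb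
      rw [DirectSum.decompose_add, DirectSum.add_apply]
      push_cast
      exact S.add_mem ha hb
  -- bracket with a homogeneous element commutes with projections (up to degree shift)
  have hproj : ∀ (y z : L) (h : G), z ∈ ℒ h → ∀ g : G,
      (DirectSum.decompose ℒ ⁅y, z⁆ (g + h) : L) =
        ⁅(DirectSum.decompose ℒ y g : L), z⁆ := by
    intro y z h hz g
    conv_lhs => rw [← DirectSum.sum_support_decompose ℒ y]
    rw [sum_lie' (F := F), DirectSum.decompose_sum, DFinsupp.finset_sum_apply,
      AddSubmonoidClass.coe_finset_sum]
    rw [Finset.sum_eq_single g]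
    · exact DirectSum.decompose_of_mem_same ℒ
        (hgrade g h _ (SetLike.coe_mem _) z hz)
    · intro i _ hig
      refine DirectSum.decompose_of_mem_ne ℒ
        (hgrade i h _ (SetLike.coe_mem _) z hz) ?_
      intro hcontra
      exact hig (add_right_cancel hcontra)
    · intro hg
      rw [DFinsupp.notMem_support_iff.mp hg]
      simp
  -- P ⊆ Q
  have hPQ : ∀ x ∈ P, x ∈ Q := by
    intro x hx
    rw [hQ]
    intro z
    have h1 : ⁅z, x⁆ ∈ P := P.lie_mem hx
    rw [← lie_skew]
    exact neg_mem h1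
  -- components of elements of Q are in Q
  have hQcomp : ∀ y ∈ Q, ∀ g, (DirectSum.decompose ℒ y g : L) ∈ Q := by
    intro y hy g
    rw [hQ]
    intro z
    rw [← DirectSum.sum_support_decompose ℒ z, lie_sum' (F := F)]
    refine Submodule.sum_mem (P : Submodule F L) fun h _ => ?_
    have := hproj y _ h (SetLike.coe_mem (DirectSum.decompose ℒ z h)) g
    rw [← this]
    exact key (P : Submodule F L) hPgr _ ((hQ y).1 hy _) _
  constructor
  · refine le_antisymm ?_ (iSup_le fun g => inf_le_left)
    intro y hy
    have hy' : y ∈ Q := hy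
    rw [← DirectSum.sum_support_decompose ℒ y]
    refine Submodule.sum_mem _ fun g _ => ?_
    exact Submodule.mem_iSup_of_mem g ⟨hQcomp y hy' g, SetLike.coe_mem _⟩
  · rintro x y ⟨a, hxa⟩ ⟨b, hyb⟩ hxyQ
    obtain ⟨z, hz⟩ : ∃ z, z ∉ P := by
      by_contra h
      push_neg at h
      exact hPne (by ext w; simp [h w])
    obtain ⟨c, hc⟩ : ∃ c, (DirectSum.decompose ℒ z c : L) ∉ P := by
      by_contra h
      push_neg at h
      apply hz
      rw [← DirectSum.sum_support_decompose ℒ z]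
      exact Submodule.sum_mem (P : Submodule F L) fun c _ => h c
    have h1 : ⁅⁅x, y⁆, (DirectSum.decompose ℒ z c : L)⁆ ∈ P := (hQ _).1 hxyQ _
    rcases htp ⁅x, y⁆ _ ⟨a + b, hgrade a b x hxa y hyb⟩ ⟨c, SetLike.coe_mem _⟩ h1 with h | h
    · rcases htp x y ⟨a, hxa⟩ ⟨b, hyb⟩ h with h' | h'
      · exact Or.inl (hPQ x h')
      · exact Or.inr (hPQ y h')
    · exact absurd h hc
end
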